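/- Let ε > 0 and for c ∈ ℝ define the Laplace density f_c(x) := (ε/4) · exp(−(ε/2)·|x − c|) with respect to Lebesgue measure on ℝ. Then the supremum over all measurable functions g : ℝ → Bool of (1/2)·∫_{ℝ} f_{−1}(x)·𝟙[g(x) = false] dx + (1/2)·∫_{ℝ} f_{1}(x)·𝟙[g(x) = true] dx equals 1 − (1/2)·exp(−ε/2), and it is attained by the sign test g(x) = true iff x > 0. (This is the optimal efficacy of one-run auditing without abstentions for the Local Laplace mechanism LLP_ε, which adds Laplace(2/ε) noise independently to each ±1 input.) -/

import Mathlib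

/-!
At each point a test collects exactly one of the two densities, so its success is at most
`½ ∫ max f₋₁ f₁`, with equality for the test that always picks the larger density. Since
`|x - 1| < |x + 1|` exactly when `x > 0`, that test is the sign test, and its success is
`1 - ½ e^{-ε/2}` because each Laplace law puts mass `½ e^{-ε/2}` beyond the origin.
-/

open MeasureTheory

/-- Bayes success probability of a test `g` distinguishing Laplace(center `-1`, scale `2/ε`)
from Laplace(center `1`, scale `2/ε`) under a uniform prior. -/
noncomputable def laplaceSuccess (ε : ℝ) (g : ℝ → Bool) : ℝ :=
  (1 / 2) * (∫ x : ℝ, (ε / 4) * Real.exp (-(ε / 2) * |x - (-1)|) *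
      (if g x = false then (1 : ℝ) else 0)) +
  (1 / 2) * (∫ x : ℝ, (ε / 4) * Real.exp (-(ε / 2) * |x - 1|) *
      (if g x = true then (1 : ℝ) else 0))

open Real Set

section BayesTest

variable {α : Type*} [MeasurableSpace α] {μ : Measure α} {p q : α → ℝ} {s : Set α}

theorem integral_mul_ite_eq_setIntegral {g : α → Bool} (hg : Measurable g) (b : Bool) :
    ∫ x, p x * (if g x = b then 1 else 0) ∂μ = ∫ x in g ⁻¹' {b}, p x ∂μ := by
  rw [← integral_indicator (hg (measurableSet_singleton b))]
  congr with x
  by_cases h : g x = b <;> simp [h]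

theorem setIntegral_add_setIntegral_compl_le_integral_max (hp : Integrable p μ)
    (hq : Integrable q μ) (hs : MeasurableSet s) :
    ∫ x in s, p x ∂μ + ∫ x in sᶜ, q x ∂μ ≤ ∫ x, max (p x) (q x) ∂μ := by
  have hmax : Integrable (fun x => max (p x) (q x)) μ := hp.sup hq
  rw [← integral_add_compl hs hmax]
  exact add_le_add
    (setIntegral_mono hp.integrableOn hmax.integrableOn fun x => le_max_left _ _)
    (setIntegral_mono hq.integrableOn hmax.integrableOn fun x => le_max_right _ _)

theorem setIntegral_add_setIntegral_compl_eq_integral_max (hp : Integrable p μ)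
    (hq : Integrable q μ) (hs : MeasurableSet s) (hqp : ∀ x ∈ s, q x ≤ p x)
    (hpq : ∀ x ∈ sᶜ, p x ≤ q x) :
    ∫ x in s, p x ∂μ + ∫ x in sᶜ, q x ∂μ = ∫ x, max (p x) (q x) ∂μ := by
  have hmax : Integrable (fun x => max (p x) (q x)) μ := hp.sup hq
  rw [← integral_add_compl hs hmax,
    setIntegral_congr_fun hs fun x hx => (max_eq_left (hqp x hx)).symm,
    setIntegral_congr_fun hs.compl fun x hx => (max_eq_right (hpq x hx)).symm]

end BayesTest

section LaplaceIntegrals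

variable {a c t : ℝ}

theorem exp_neg_mul_abs_sub_of_le {x : ℝ} (hx : x ≤ c) :
    exp (-a * |x - c|) = exp (-a * c) * exp (a * x) := by
  rw [abs_of_nonpos (sub_nonpos.mpr hx), ← exp_add]
  ring_nf

theorem exp_neg_mul_abs_sub_of_ge {x : ℝ} (hx : c ≤ x) :
    exp (-a * |x - c|) = exp (a * c) * exp (-a * x) := by
  rw [abs_of_nonneg (sub_nonneg.mpr hx), ← exp_add]
  ring_nf

theorem integrableOn_Iic_exp_neg_mul_abs_sub (ha : 0 < a) (htc : t ≤ c) :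
    IntegrableOn (fun x => exp (-a * |x - c|)) (Iic t) :=
  IntegrableOn.congr_fun ((integrableOn_exp_mul_Iic ha t).const_mul _)
    (fun _ hx => (exp_neg_mul_abs_sub_of_le ((mem_Iic.mp hx).trans htc)).symm) measurableSet_Iic

theorem integrableOn_Ioi_exp_neg_mul_abs_sub (ha : 0 < a) (hct : c ≤ t) :
    IntegrableOn (fun x => exp (-a * |x - c|)) (Ioi t) :=
  IntegrableOn.congr_fun ((integrableOn_exp_mul_Ioi (neg_neg_of_pos ha) t).const_mul _)
    (fun _ hx => (exp_neg_mul_abs_sub_of_ge (hct.trans (mem_Ioi.mp hx).le)).symm)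
    measurableSet_Ioi

theorem integral_Iic_exp_neg_mul_abs_sub (ha : 0 < a) (htc : t ≤ c) :
    ∫ x in Iic t, exp (-a * |x - c|) = exp (-a * (c - t)) / a := by
  rw [setIntegral_congr_fun measurableSet_Iic
      fun x hx => exp_neg_mul_abs_sub_of_le ((mem_Iic.mp hx).trans htc),
    integral_const_mul, integral_exp_mul_Iic ha, mul_div_assoc', ← exp_add]
  ring_nf

theorem integral_Ioi_exp_neg_mul_abs_sub (ha : 0 < a) (hct : c ≤ t) :
    ∫ x in Ioi t, exp (-a * |x - c|) = exp (-a * (t - c)) / a := by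
  rw [setIntegral_congr_fun measurableSet_Ioi
      fun x hx => exp_neg_mul_abs_sub_of_ge (hct.trans (mem_Ioi.mp hx).le),
    integral_const_mul, integral_exp_mul_Ioi (neg_neg_of_pos ha), neg_div_neg_eq,
    mul_div_assoc', ← exp_add]
  ring_nf

theorem integrable_exp_neg_mul_abs_sub (ha : 0 < a) (c : ℝ) :
    Integrable (fun x => exp (-a * |x - c|)) := by
  rw [← integrableOn_univ, ← Iic_union_Ioi (a := c)]
  exact (integrableOn_Iic_exp_neg_mul_abs_sub ha le_rfl).union
    (integrableOn_Ioi_exp_neg_mul_abs_sub ha le_rfl)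

theorem integral_exp_neg_mul_abs_sub (ha : 0 < a) (c : ℝ) :
    ∫ x, exp (-a * |x - c|) = 2 / a := by
  rw [← intervalIntegral.integral_Iic_add_Ioi (integrableOn_Iic_exp_neg_mul_abs_sub ha le_rfl)
      (integrableOn_Ioi_exp_neg_mul_abs_sub ha le_rfl),
    integral_Iic_exp_neg_mul_abs_sub ha le_rfl, integral_Ioi_exp_neg_mul_abs_sub ha le_rfl]
  simp only [sub_self, mul_zero, exp_zero]
  ring

theorem integral_Ioi_exp_neg_mul_abs_sub_of_le (ha : 0 < a) (htc : t ≤ c) :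
    ∫ x in Ioi t, exp (-a * |x - c|) = (2 - exp (-a * (c - t))) / a := by
  rw [← compl_Iic, setIntegral_compl measurableSet_Iic (integrable_exp_neg_mul_abs_sub ha c),
    integral_exp_neg_mul_abs_sub ha, integral_Iic_exp_neg_mul_abs_sub ha htc, sub_div]

theorem integral_Iic_exp_neg_mul_abs_sub_of_ge (ha : 0 < a) (hct : c ≤ t) :
    ∫ x in Iic t, exp (-a * |x - c|) = (2 - exp (-a * (t - c))) / a := by
  rw [← compl_Ioi, setIntegral_compl measurableSet_Ioi (integrable_exp_neg_mul_abs_sub ha c),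
    integral_exp_neg_mul_abs_sub ha, integral_Ioi_exp_neg_mul_abs_sub ha hct, sub_div]

end LaplaceIntegrals

section LaplaceTest

variable {ε : ℝ}

noncomputable def laplaceDensity (ε c x : ℝ) : ℝ :=
  ε / 4 * exp (-(ε / 2) * |x - c|)

theorem integrable_laplaceDensity (hε : 0 < ε) (c : ℝ) : Integrable (laplaceDensity ε c) :=
  (integrable_exp_neg_mul_abs_sub (half_pos hε) c).const_mul _

theorem laplaceDensity_le_of_abs_le (hε : 0 ≤ ε) {c d x : ℝ} (h : |x - d| ≤ |x - c|) :
    laplaceDensity ε c x ≤ laplaceDensity ε d x := by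
  unfold laplaceDensity
  simp only [neg_mul]
  gcongr

theorem laplaceSuccess_eq_setIntegral {g : ℝ → Bool} (hg : Measurable g) :
    laplaceSuccess ε g = 1 / 2 * ((∫ x in g ⁻¹' {false}, laplaceDensity ε (-1) x) +
      ∫ x in (g ⁻¹' {false})ᶜ, laplaceDensity ε 1 x) := by
  have htrue : (g ⁻¹' {false})ᶜ = g ⁻¹' {true} := by ext; simp
  rw [laplaceSuccess, integral_mul_ite_eq_setIntegral hg, integral_mul_ite_eq_setIntegral hg,
    htrue, mul_add]
  rfl

theorem laplaceSuccess_le_integral_max (hε : 0 < ε) {g : ℝ → Bool} (hg : Measurable g) :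
    laplaceSuccess ε g ≤
      1 / 2 * ∫ x, max (laplaceDensity ε (-1) x) (laplaceDensity ε 1 x) := by
  rw [laplaceSuccess_eq_setIntegral hg]
  gcongr
  exact setIntegral_add_setIntegral_compl_le_integral_max (integrable_laplaceDensity hε _)
    (integrable_laplaceDensity hε _) (hg (measurableSet_singleton false))

theorem measurable_decide_pos : Measurable fun x : ℝ => decide (0 < x) :=
  measurable_to_bool <| by
    convert measurableSet_Ioi (a := (0 : ℝ))
    ext; simp

theorem preimage_decide_pos_false : (fun x : ℝ => decide (0 < x)) ⁻¹' {false} = Iic 0 := by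
  ext; simp

theorem laplaceSuccess_decide_pos_eq_integral_max (hε : 0 < ε) :
    laplaceSuccess ε (fun x => decide (0 < x)) =
      1 / 2 * ∫ x, max (laplaceDensity ε (-1) x) (laplaceDensity ε 1 x) := by
  rw [laplaceSuccess_eq_setIntegral measurable_decide_pos, preimage_decide_pos_false,
    setIntegral_add_setIntegral_compl_eq_integral_max (integrable_laplaceDensity hε _)
      (integrable_laplaceDensity hε _) measurableSet_Iic]
  · intro x hx
    refine laplaceDensity_le_of_abs_le hε.le (sq_le_sq.mp ?_)
    nlinarith [mem_Iic.mp hx]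
  · intro x hx
    refine laplaceDensity_le_of_abs_le hε.le (sq_le_sq.mp ?_)
    nlinarith [notMem_Iic.mp hx]

theorem laplaceSuccess_decide_pos (hε : 0 < ε) :
    laplaceSuccess ε (fun x => decide (0 < x)) = 1 - 1 / 2 * exp (-ε / 2) := by
  rw [laplaceSuccess_eq_setIntegral measurable_decide_pos, preimage_decide_pos_false, compl_Iic]
  simp only [laplaceDensity]
  rw [integral_const_mul, integral_const_mul,
    integral_Iic_exp_neg_mul_abs_sub_of_ge (half_pos hε) (by norm_num),
    integral_Ioi_exp_neg_mul_abs_sub_of_le (half_pos hε) zero_le_one]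
  field_simp
  ring_nf

end LaplaceTest

theorem stmt12 (ε : ℝ) (hε : 0 < ε) :
    sSup {r : ℝ | ∃ g : ℝ → Bool, Measurable g ∧ r = laplaceSuccess ε g} =
      1 - (1 / 2) * Real.exp (-ε / 2) ∧
    laplaceSuccess ε (fun x => decide (0 < x)) = 1 - (1 / 2) * Real.exp (-ε / 2) := by
  have hsign := laplaceSuccess_decide_pos hε
  refine ⟨IsGreatest.csSup_eq ⟨⟨_, measurable_decide_pos, hsign.symm⟩, ?_⟩, hsign⟩
  rintro _ ⟨g, hg, rfl⟩
  rw [← hsign, laplaceSuccess_decide_pos_eq_integral_max hε]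
  exact laplaceSuccess_le_integral_max hε hg
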